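/- arXiv:1504.03838 — 3 statements merged into one kernel-verified Lean document; each statement's English description precedes it below -/
import Mathlib

section
/- Let p > 3 be prime and write r = 2 + n(p-1)p^t with t ≥ 0 and n ≥ 0. Then Σ_{0<j<r, j≡2 mod (p-1)} C(r,j) ≡ p(2-r)/2 (mod p^{t+2}). -/
/-!
Work in `ZMod (p ^ (t + 2))`. The Teichmüller lifts `ω a` of the units `a` modulo `p` form a
cyclic group of order `p - 1`, so summing `ω a ^ (p - 3) * (1 + ω a) ^ e`, that is
`ω a⁻¹ ^ 2 * (1 + ω a) ^ e`, over `a` picks out the coefficients `e.choose j` with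
`j ≡ 2 [MOD p - 1]`. If `u = 1 + ω a` is a unit then `u ^ (p - 1) = 1 + p x`, whence
`u ^ (n (p - 1) p ^ t) = 1 + n p ^ t (u ^ (p - 1) - 1)` modulo `p ^ (t + 2)`. So the lacunary
sum for `r` is an explicit combination of those for `2` and `p + 1`, which are `1` and
`1 + p (p + 1) / 2`.
-/

open Finset

section CommRing

variable {R : Type*} [CommRing R]

theorem sum_monoidHom_eq_zero_of_isUnit_sub_one {G : Type*} [Group G] [Fintype G] (f : G →* R)
    {g : G} (hg : IsUnit (f g - 1)) : ∑ x, f x = 0 := by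
  refine hg.mul_right_eq_zero.1 ?_
  rw [sub_mul, one_mul, mul_sum, sub_eq_zero]
  simp_rw [← map_mul]
  exact Fintype.sum_bijective _ (Group.mulLeft_bijective g) _ _ fun _ => rfl

theorem one_add_pow_of_mul_self_eq_zero {ε : R} (hε : ε * ε = 0) (n : ℕ) :
    (1 + ε) ^ n = 1 + n * ε := by
  induction n with
  | zero => simp
  | succ n ih => rw [pow_succ, ih]; push_cast; linear_combination (n : R) * hε

variable {p t : ℕ}

theorem one_add_mul_pow_prime_pow (hp : p.Prime) (hp2 : p ≠ 2) (hpt : (p : R) ^ (t + 2) = 0)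
    (x : R) : (1 + p * x) ^ p ^ t = 1 + p ^ (t + 1) * x := by
  have hp3 : 3 ≤ p := hp.two_le.lt_of_ne' hp2
  obtain ⟨y, hy⟩ := ZMod.exists_one_add_mul_pow_prime_pow_eq (u := (p : R)) (v := p) hp dvd_rfl
    (by rw [← pow_two, ← pow_succ]; exact pow_dvd_pow _ hp3) x t
  rw [hy]
  linear_combination y * hpt

theorem pow_two_add_mul_sub_one_mul_prime_pow (hp : p.Prime) (hp2 : p ≠ 2)
    (hpt : (p : R) ^ (t + 2) = 0) {u : R} (hu : (p : R) ∣ u ^ (p - 1) - 1) (n : ℕ) :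
    u ^ (2 + n * (p - 1) * p ^ t) = u ^ 2 + n * p ^ t * (u ^ (p + 1) - u ^ 2) := by
  obtain ⟨x, hx⟩ := hu
  have hu' : u ^ (p - 1) = 1 + p * x := by linear_combination hx
  have hsq : (p ^ (t + 1) * x : R) * (p ^ (t + 1) * x) = 0 := by
    linear_combination ((p : R) ^ t * x ^ 2) * hpt
  calc u ^ (2 + n * (p - 1) * p ^ t) = u ^ 2 * ((u ^ (p - 1)) ^ p ^ t) ^ n := by
        rw [← pow_mul, ← pow_mul, ← pow_add]; ring_nf
    _ = u ^ 2 * (1 + n * (p ^ (t + 1) * x)) := by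
        rw [hu', one_add_mul_pow_prime_pow hp hp2 hpt, one_add_pow_of_mul_self_eq_zero hsq]
    _ = u ^ 2 + n * p ^ t * (u ^ (p + 1) - u ^ 2) := by
        rw [show p + 1 = p - 1 + 2 by have := hp.two_le; omega, pow_add u (p - 1), hu']; ring

end CommRing

section Lacunary

def lacunaryChooseSum (m c e : ℕ) : ℕ :=
  ∑ j ∈ (range (e + 1)).filter (fun j => j ≡ c [MOD m]), e.choose j

variable {m : ℕ}

theorem Nat.dvd_add_sub_two_iff_modEq {j : ℕ} (hm : 2 ≤ m) :
    m ∣ j + (m - 2) ↔ j ≡ 2 [MOD m] := by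
  rw [← Nat.add_modEq_right_iff (b := 2), show j + (m - 2) + 2 = j + m by omega,
    Nat.add_modulus_modEq_iff]

theorem Nat.modEq_two_iff_of_lt {j : ℕ} (hm : 3 ≤ m) (hj : j < 2 * m) :
    j ≡ 2 [MOD m] ↔ j = 2 ∨ j = m + 2 := by
  rw [Nat.ModEq, Nat.mod_eq_of_lt (by omega : 2 < m)]
  rcases lt_or_ge j m with h | h
  · rw [Nat.mod_eq_of_lt h]; omega
  · rw [Nat.mod_eq_sub_mod h, Nat.mod_eq_of_lt (by omega)]; omega

theorem lacunaryChooseSum_two (hm : 3 ≤ m) : lacunaryChooseSum m 2 2 = 1 := by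
  have hfilter : (range (2 + 1)).filter (fun j => j ≡ 2 [MOD m]) = {2} := by
    ext j
    rw [mem_filter, mem_range, mem_singleton]
    by_cases hj : j < 2 * m
    · rw [Nat.modEq_two_iff_of_lt hm hj]; omega
    · omega
  rw [lacunaryChooseSum, hfilter, sum_singleton, Nat.choose_self]

theorem lacunaryChooseSum_add_two (hm : 3 ≤ m) :
    lacunaryChooseSum m 2 (m + 2) = (m + 2).choose 2 + 1 := by
  have hfilter : (range (m + 2 + 1)).filter (fun j => j ≡ 2 [MOD m]) = {2, m + 2} := by
    ext j
    rw [mem_filter, mem_range, mem_insert, mem_singleton]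
    by_cases hj : j < 2 * m
    · rw [Nat.modEq_two_iff_of_lt hm hj]; omega
    · omega
  rw [lacunaryChooseSum, hfilter, sum_pair (by omega), Nat.choose_self]

theorem lacunaryChooseSum_eq_sum_Ioo_add_one {c r : ℕ} (hr : r ≡ c [MOD m])
    (h0 : ¬ 0 ≡ c [MOD m]) :
    lacunaryChooseSum m c r =
      ∑ j ∈ (Ioo 0 r).filter (fun j => j ≡ c [MOD m]), r.choose j + 1 := by
  have hr0 : r ≠ 0 := by rintro rfl; exact h0 hr
  have hfilter : (range (r + 1)).filter (fun j => j ≡ c [MOD m]) =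
      insert r ((Ioo 0 r).filter (fun j => j ≡ c [MOD m])) := by
    ext j
    rw [mem_filter, mem_range, mem_insert, mem_filter, mem_Ioo]
    rcases Nat.eq_zero_or_pos j with rfl | hj0
    · simp [h0, hr0.symm]
    · rcases eq_or_ne j r with rfl | hjr
      · simp [hr]
      · simp only [hjr, false_or, hj0, true_and]
        exact and_congr_left fun _ => by omega
  rw [lacunaryChooseSum, hfilter, sum_insert (by simp), Nat.choose_self, add_comm]

end Lacunary

namespace ZMod

variable {p : ℕ} [Fact p.Prime] {k : ℕ}

local notation "π" => ZMod.castHom (dvd_pow_self p (Nat.succ_ne_zero k)) (ZMod p)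

theorem dvd_of_castHom_eq_zero {x : ZMod (p ^ (k + 1))} (hx : π x = 0) :
    (p : ZMod (p ^ (k + 1))) ∣ x := by
  rw [← natCast_zmod_val x, map_natCast, natCast_eq_zero_iff] at hx
  obtain ⟨m, hm⟩ := hx
  exact ⟨m, by rw [← natCast_zmod_val x, hm, Nat.cast_mul]⟩

theorem isUnit_of_castHom_ne_zero {x : ZMod (p ^ (k + 1))} (hx : π x ≠ 0) : IsUnit x := by
  rw [← natCast_zmod_val x, isUnit_natCast_iff_not_dvd_pow Fact.out k.succ_pos]
  rwa [← natCast_zmod_val x, map_natCast, Ne, natCast_eq_zero_iff] at hx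

theorem castHom_natCast_val (a : ZMod p) : π (a.val : ZMod (p ^ (k + 1))) = a := by
  rw [map_natCast, natCast_zmod_val]

theorem pow_prime_pow_eq_of_castHom_eq {x y : ZMod (p ^ (k + 1))} (h : π x = π y) :
    x ^ p ^ k = y ^ p ^ k := by
  have hdvd := dvd_sub_pow_of_dvd_sub
    (dvd_of_castHom_eq_zero (x := x - y) (by rw [map_sub, h, sub_self])) k
  rwa [← Nat.cast_pow, natCast_self, zero_dvd_iff, sub_eq_zero] at hdvd

-- The `p ^ k`-th power of a lift of `a` does not depend on the lift.
variable (p k) in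
def teichmuller : (ZMod p)ˣ →* ZMod (p ^ (k + 1)) where
  toFun a := ((a : ZMod p).val : ZMod (p ^ (k + 1))) ^ p ^ k
  map_one' := (pow_prime_pow_eq_of_castHom_eq (y := 1)
    (by rw [castHom_natCast_val, Units.val_one, map_one])).trans (one_pow _)
  map_mul' a b := by
    rw [← mul_pow]
    exact pow_prime_pow_eq_of_castHom_eq
      (by rw [map_mul, castHom_natCast_val, castHom_natCast_val, castHom_natCast_val,
        Units.val_mul])

theorem teichmuller_eq_pow_of_castHom_eq {a : (ZMod p)ˣ} {x : ZMod (p ^ (k + 1))}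
    (hx : π x = a) : teichmuller p k a = x ^ p ^ k :=
  pow_prime_pow_eq_of_castHom_eq (by rw [castHom_natCast_val, hx])

theorem castHom_teichmuller (a : (ZMod p)ˣ) : π (teichmuller p k a) = a := by
  rw [teichmuller, MonoidHom.coe_mk, OneHom.coe_mk, map_pow, castHom_natCast_val, pow_card_pow]

theorem teichmuller_neg_one (hp2 : p ≠ 2) : teichmuller p k (-1) = -1 := by
  rw [teichmuller_eq_pow_of_castHom_eq (x := -1)
      (by rw [map_neg, map_one, Units.val_neg, Units.val_one]),
    Odd.neg_one_pow ((Nat.Prime.odd_of_ne_two Fact.out hp2).pow)]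

theorem sum_teichmuller_pow (i : ℕ) :
    ∑ a, teichmuller p k a ^ i =
      if p - 1 ∣ i then ((p - 1 : ℕ) : ZMod (p ^ (k + 1))) else 0 := by
  have hexp : p - 1 ∣ i ↔ ∀ a : (ZMod p)ˣ, a ^ i = 1 := by
    rw [← ZMod.card_units p, ← Nat.card_eq_fintype_card, ← IsCyclic.exponent_eq_card,
      Monoid.exponent_dvd_iff_forall_pow_eq_one]
  split_ifs with hi
  · simp [← map_pow, hexp.1 hi, Nat.totient_prime Fact.out]
  · obtain ⟨g, hg⟩ := not_forall.1 (hexp.not.1 hi)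
    refine sum_monoidHom_eq_zero_of_isUnit_sub_one ((powMonoidHom i).comp (teichmuller p k))
      (g := g) (isUnit_of_castHom_ne_zero ?_)
    rw [MonoidHom.comp_apply, powMonoidHom_apply, map_sub, map_pow, castHom_teichmuller, map_one,
      sub_ne_zero, ← Units.val_pow_eq_pow_val, Ne, Units.val_eq_one]
    exact hg

theorem sum_teichmuller_pow_mul_one_add_pow (s e : ℕ) :
    ∑ a, teichmuller p k a ^ s * (1 + teichmuller p k a) ^ e =
      (p - 1 : ℕ) * ∑ j ∈ (range (e + 1)).filter (fun j => p - 1 ∣ s + j),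
        (e.choose j : ZMod (p ^ (k + 1))) := by
  simp_rw [add_comm (1 : ZMod _), add_pow, one_pow, mul_one, mul_sum, ← mul_assoc, ← pow_add]
  rw [sum_comm, sum_filter]
  refine sum_congr rfl fun j _ => ?_
  rw [← sum_mul, sum_teichmuller_pow]
  split_ifs <;> simp

theorem sum_teichmuller_pow_sub_three_mul_one_add_pow (hp3 : 3 ≤ p) (e : ℕ) :
    ∑ a, teichmuller p k a ^ (p - 3) * (1 + teichmuller p k a) ^ e =
      (p - 1 : ℕ) * (lacunaryChooseSum (p - 1) 2 e : ZMod (p ^ (k + 1))) := by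
  rw [sum_teichmuller_pow_mul_one_add_pow, lacunaryChooseSum, Nat.cast_sum]
  congr 2
  refine filter_congr fun j _ => ?_
  rw [add_comm, show p - 3 = p - 1 - 2 by omega, Nat.dvd_add_sub_two_iff_modEq (by omega)]

theorem one_add_teichmuller_pow_eq (hp2 : p ≠ 2) (a : (ZMod p)ˣ) (n t : ℕ) :
    (1 + teichmuller p (t + 1) a) ^ (2 + n * (p - 1) * p ^ t) =
      (1 + teichmuller p (t + 1) a) ^ 2 + n * p ^ t *
        ((1 + teichmuller p (t + 1) a) ^ (p + 1) - (1 + teichmuller p (t + 1) a) ^ 2) := by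
  by_cases ha : (1 + a : ZMod p) = 0
  · have : a = -1 := Units.ext (by rw [Units.val_neg, Units.val_one]; linear_combination ha)
    rw [this, teichmuller_neg_one hp2, add_neg_cancel]
    simp
  · refine pow_two_add_mul_sub_one_mul_prime_pow Fact.out hp2 ?_ (dvd_of_castHom_eq_zero ?_) n
    · rw [← Nat.cast_pow]; exact natCast_self _
    · rw [map_sub, map_pow, map_add, map_one, castHom_teichmuller, pow_card_sub_one_eq_one ha,
        sub_self]

theorem lacunaryChooseSum_two_add_mul_eq (hp3 : 3 ≤ p) (n t : ℕ) :
    (lacunaryChooseSum (p - 1) 2 (2 + n * (p - 1) * p ^ t) : ZMod (p ^ (t + 1 + 1))) =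
      lacunaryChooseSum (p - 1) 2 2 + (n : ZMod (p ^ (t + 1 + 1))) * p ^ t *
        (lacunaryChooseSum (p - 1) 2 (p + 1) - lacunaryChooseSum (p - 1) 2 2) := by
  have hunit : IsUnit ((p - 1 : ℕ) : ZMod (p ^ (t + 1 + 1))) := by
    refine isUnit_of_castHom_ne_zero ?_
    rw [map_natCast, Ne, natCast_eq_zero_iff]
    exact Nat.not_dvd_of_pos_of_lt (by omega) (by omega)
  refine hunit.mul_left_cancel ?_
  let ω := teichmuller p (t + 1)
  calc _ = ∑ a, ω a ^ (p - 3) * (1 + ω a) ^ (2 + n * (p - 1) * p ^ t) :=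
        (sum_teichmuller_pow_sub_three_mul_one_add_pow hp3 _).symm
    _ = ∑ a, (ω a ^ (p - 3) * (1 + ω a) ^ 2 +
          n * p ^ t * (ω a ^ (p - 3) * (1 + ω a) ^ (p + 1) - ω a ^ (p - 3) * (1 + ω a) ^ 2)) :=
        sum_congr rfl fun a _ => by rw [one_add_teichmuller_pow_eq (by omega)]; ring
    _ = _ := by
        rw [sum_add_distrib, ← mul_sum, sum_sub_distrib,
          sum_teichmuller_pow_sub_three_mul_one_add_pow hp3,
          sum_teichmuller_pow_sub_three_mul_one_add_pow hp3]
        ring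

end ZMod

theorem stmt_7 (p n t r : ℕ) (hp : p.Prime) (hp3 : 3 < p)
    (hr : r = 2 + n * (p - 1) * p^t) :
    (p : ℤ)^(t + 2) ∣ 2 * (∑ j ∈ (Finset.Ioo 0 r).filter
        (fun j => j % (p - 1) = 2 % (p - 1)), (r.choose j : ℤ))
      - (p : ℤ) * (2 - (r : ℤ)) := by
  have := Fact.mk hp
  have hm : 3 ≤ p - 1 := by omega
  have hsum := lacunaryChooseSum_eq_sum_Ioo_add_one (m := p - 1) (c := 2) (r := r)
    (by rw [hr, Nat.ModEq]; simp [Nat.mul_right_comm _ (p - 1)])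
    (by rw [Nat.ModEq, Nat.zero_mod, Nat.mod_eq_of_lt (by omega)]; omega)
  have hchoose : (p + 1).choose 2 * 2 = (p + 1) * p := by
    rw [← Nat.add_one_mul_choose_eq, Nat.choose_one_right]
  have hlacunary := ZMod.lacunaryChooseSum_two_add_mul_eq hp3.le n t
  rw [← hr, hsum, lacunaryChooseSum_two hm, show p + 1 = p - 1 + 2 by omega,
    lacunaryChooseSum_add_two hm, show p - 1 + 2 = p + 1 by omega] at hlacunary
  simp only [Nat.ModEq] at hlacunary
  rw [show (p : ℤ) ^ (t + 2) = ((p ^ (t + 1 + 1) : ℕ) : ℤ) by push_cast; rfl,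
    ← ZMod.intCast_zmod_eq_zero_iff_dvd]
  have hpt : (p : ZMod (p ^ (t + 1 + 1))) ^ (t + 2) = 0 := by
    rw [← Nat.cast_pow]; exact ZMod.natCast_self _
  have hchoose' := congrArg (Nat.cast : ℕ → ZMod (p ^ (t + 1 + 1))) hchoose
  push_cast [hr, Nat.cast_sub hp.one_le] at hlacunary hchoose' ⊢
  linear_combination 2 * hlacunary + n * p ^ t * hchoose' + 2 * n * hpt
end

section
/- Let p > 3 be prime and write s = 1 + n(p-1)p^t with t ≥ 0 and n ≥ 0. Then for all i ≥ 2 with i ≤ t+2, Σ_{0≤j≤s, j≡1 mod (p-1)} C(j,i)·C(s,j) ≡ 0 (mod p^{t+2-i}). -/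
/-!
Every summand is divisible by `C(s, i)`, since `C(j, i) C(s, j) = C(s, i) C(s - i, j - i)`.
From `i (i - 1) C(s, i) = s (s - 1) C(s - 2, i - 2)` and `p ^ t ∣ s - 1` we get
`t ≤ v_p(C(s, i)) + v_p(i (i - 1))`. As `i` and `i - 1` are coprime, `v_p(i (i - 1))` is the
valuation of a single factor `x ≤ i` with `p ^ v_p(x) ≤ x`, and for odd `p` this forces
`v_p(i (i - 1)) ≤ i - 2`.
-/

namespace Nat

theorem choose_dvd_choose_mul_choose (s i j : ℕ) : s.choose i ∣ j.choose i * s.choose j := by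
  rcases lt_or_ge j i with hji | hij
  · simp [choose_eq_zero_of_lt hji]
  rcases le_or_gt j s with hjs | hsj
  · rw [mul_comm, choose_mul hij]
    exact dvd_mul_right _ _
  · simp [choose_eq_zero_of_lt hsj]

theorem sub_one_dvd_choose_mul_mul_sub_one (s i : ℕ) : s - 1 ∣ s.choose i * (i * (i - 1)) := by
  obtain _ | _ | k := i
  · simp
  · simp
  obtain _ | _ | m := s
  · simp
  · simp [choose_eq_zero_of_lt]
  refine ⟨(m + 2) * m.choose k, ?_⟩
  have h₁ := add_one_mul_choose_eq (m + 1) (k + 1)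
  have h₂ := add_one_mul_choose_eq m k
  calc (m + 2).choose (k + 2) * ((k + 2) * (k + 1))
      = (m + 2) * (m + 1).choose (k + 1) * (k + 1) := by rw [h₁]; ring
    _ = (m + 2) * ((m + 1) * m.choose k) := by rw [h₂]; ring
    _ = (m + 2 - 1) * ((m + 2) * m.choose k) := by rw [Nat.add_succ_sub_one]; ring

theorem add_two_le_pow {p v : ℕ} (hp : 3 ≤ p) (hv : 1 ≤ v) : v + 2 ≤ p ^ v := by
  have bernoulli :=
    one_add_mul_le_pow_of_sq_nonneg (a := p - 1) (zero_le _) (zero_le _) (zero_le _) v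
  rw [Nat.cast_id, show 1 + (p - 1) = p by omega] at bernoulli
  have : v * 2 ≤ v * (p - 1) := Nat.mul_le_mul_left v (by omega)
  omega

end Nat

theorem padicValNat_mul_sub_one_le {p i : ℕ} [Fact p.Prime] (hp : 3 ≤ p) (hi : 2 ≤ i) :
    padicValNat p (i * (i - 1)) ≤ i - 2 := by
  rw [padicValNat.mul (by omega) (by omega)]
  have pow_le (x : ℕ) (hx : x ≠ 0) : p ^ padicValNat p x ≤ x :=
    Nat.le_of_dvd (Nat.pos_of_ne_zero hx) pow_padicValNat_dvd
  by_cases hpi : p ∣ i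
  · have hpi' : ¬ p ∣ i - 1 := fun h => by
      have := Nat.dvd_sub hpi h
      rw [show i - (i - 1) = 1 by omega, Nat.dvd_one] at this
      omega
    have hv := one_le_padicValNat_of_dvd (by omega) hpi
    have := Nat.add_two_le_pow hp hv
    have := pow_le i (by omega)
    rw [padicValNat.eq_zero_of_not_dvd hpi']
    omega
  · have : padicValNat p (i - 1) < p ^ padicValNat p (i - 1) := Nat.lt_pow_self (by omega)
    have := pow_le (i - 1) (by omega)
    rw [padicValNat.eq_zero_of_not_dvd hpi]
    omega

theorem pow_dvd_choose_of_pow_dvd_sub_one {p t s i : ℕ} [Fact p.Prime] (hp : 3 ≤ p)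
    (hs : p ^ t ∣ s - 1) (hi : 2 ≤ i) : p ^ (t + 2 - i) ∣ s.choose i := by
  rcases eq_or_ne (s.choose i) 0 with hc | hc
  · simp [hc]
  have hii : i * (i - 1) ≠ 0 := by
    have : i - 1 ≠ 0 := by omega
    positivity
  have hmul : p ^ t ∣ s.choose i * (i * (i - 1)) :=
    hs.trans (Nat.sub_one_dvd_choose_mul_mul_sub_one s i)
  rw [padicValNat_dvd_iff_le (mul_ne_zero hc hii), padicValNat.mul hc hii] at hmul
  rw [padicValNat_dvd_iff_le hc]
  have := padicValNat_mul_sub_one_le (p := p) hp hi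
  omega

theorem stmt_13 (p n t s : ℕ) (hp : p.Prime) (hp3 : 3 < p)
    (hs : s = 1 + n * (p - 1) * p^t) :
    ∀ i : ℕ, 2 ≤ i → i ≤ t + 2 →
      (p : ℤ)^(t + 2 - i) ∣ ∑ j ∈ (Finset.range (s + 1)).filter
        (fun j => j % (p - 1) = 1 % (p - 1)), (j.choose i : ℤ) * (s.choose j : ℤ) := by
  have := Fact.mk hp
  intro i hi _
  have hpt : p ^ t ∣ s - 1 := by
    rw [hs, Nat.add_sub_cancel_left]
    exact dvd_mul_left _ _
  have hchoose := pow_dvd_choose_of_pow_dvd_sub_one (by omega) hpt hi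
  refine Finset.dvd_sum fun j _ => ?_
  exact_mod_cast hchoose.trans (Nat.choose_dvd_choose_mul_choose s i j)
end

section
/- Let p > 3 be prime and write r = 2 + n(p-1)p^t with t ≥ 0 and n ≥ 0. Then Σ_{1<j≤r-1, j≡1 mod (p-1)} C(r,j) ≡ 2 - r + 2n·p^{t+1} (mod p^{t+2}). -/
/-!
Write `T m` for the sum of `m.choose j` over `j ≡ 1 [MOD p - 1]`. In `R = ZMod (p ^ (t + 2))` the
Teichmüller lift `ω` of a generator of `(ZMod p)ˣ` has order `p - 1`, and `ω ^ i - 1` is a unit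
unless `p - 1 ∣ i`, so the roots-of-unity filter gives `(p - 1) * T m = ∑ k, ω⁻ᵏ (1 + ω ^ k) ^ m`.
Each `y = 1 + ω ^ k` is a unit or zero. For a unit, `y ^ (p - 1) = 1 + p c` and hence
`y ^ ((p - 1) p ^ t) = 1 + p ^ (t + 1) c`, so that `y ^ r = y ^ 2 + n p ^ t (y ^ (p + 1) - y ^ 2)`
for `r = 2 + n (p - 1) p ^ t`. Summing over `k` and cancelling the unit `p - 1`,
`T r = T 2 + n p ^ t (T (p + 1) - T 2) = 2 + 2 n p ^ (t + 1)`; of the terms of `T r`, only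
`j = 1` lies outside the range `1 < j ≤ r - 1` of the theorem.
-/

open Finset

def chooseSumOneMod (N m : ℕ) : ℕ :=
  ∑ j ∈ (range (m + 1)).filter (· % N = 1 % N), m.choose j

theorem geom_sum_eq_zero_of_pow_eq_one {R : Type*} [CommRing R] {z : R} {N : ℕ}
    (hz : z ^ N = 1) (hz1 : IsUnit (z - 1)) : ∑ i ∈ range N, z ^ i = 0 := by
  have h := geom_sum_mul z N
  rw [hz, sub_self] at h
  exact hz1.mul_left_eq_zero.mp h

theorem Nat.dvd_add_sub_one_iff_mod_eq_one_mod {N j : ℕ} (hN : 0 < N) :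
    N ∣ j + (N - 1) ↔ j % N = 1 % N := by
  rw [← Nat.modEq_zero_iff_dvd]
  constructor
  · intro h
    have := h.add_right 1
    rw [add_assoc, Nat.sub_add_cancel hN] at this
    simpa [Nat.ModEq] using this
  · intro h
    have := Nat.ModEq.add_right (N - 1) h
    rw [Nat.add_sub_cancel' hN] at this
    exact this.trans (Nat.modEq_zero_iff_dvd.mpr dvd_rfl)

-- Since `ω ^ N = 1`, the factor `ω ^ (k * (N - 1))` plays the role of `ω⁻ᵏ`.
theorem sum_pow_mul_one_add_pow {R : Type*} [CommRing R] {N : ℕ} {ω : R} (hω : ω ^ N = 1)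
    (hunit : ∀ i, ¬ N ∣ i → IsUnit (ω ^ i - 1)) (m : ℕ) :
    ∑ k ∈ range N, ω ^ (k * (N - 1)) * (1 + ω ^ k) ^ m = N * (chooseSumOneMod N m : R) := by
  rcases Nat.eq_zero_or_pos N with rfl | hN
  · simp
  have hroot : ∀ j, ∑ k ∈ range N, (ω ^ (j + (N - 1))) ^ k =
      if N ∣ j + (N - 1) then (N : R) else 0 := by
    intro j
    split_ifs with h
    · obtain ⟨c, hc⟩ := h
      simp [hc, pow_mul, hω]
    · refine geom_sum_eq_zero_of_pow_eq_one ?_ (hunit _ h)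
      rw [← pow_mul, mul_comm, pow_mul, hω, one_pow]
  calc ∑ k ∈ range N, ω ^ (k * (N - 1)) * (1 + ω ^ k) ^ m
      = ∑ j ∈ range (m + 1), (m.choose j : R) * ∑ k ∈ range N, (ω ^ (j + (N - 1))) ^ k := by
        simp_rw [mul_sum, add_comm (1 : R), add_pow, one_pow, mul_one, mul_sum]
        rw [sum_comm]
        refine sum_congr rfl fun j _ => sum_congr rfl fun k _ => ?_
        ring
    _ = N * (chooseSumOneMod N m : R) := by
        simp_rw [hroot, chooseSumOneMod, Nat.dvd_add_sub_one_iff_mod_eq_one_mod hN, Nat.cast_sum,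
          mul_sum, sum_filter]
        refine sum_congr rfl fun j _ => ?_
        split_ifs <;> ring

theorem one_add_pow_of_sq_eq_zero {R : Type*} [CommRing R] {x : R} (hx : x ^ 2 = 0) (n : ℕ) :
    (1 + x) ^ n = 1 + n * x := by
  induction n with
  | zero => simp
  | succ n ih =>
    rw [pow_succ, ih]
    push_cast
    linear_combination (n : R) * hx

theorem exists_one_add_pow_prime_pow_mul_pow_eq {R : Type*} [CommRing R] {p : ℕ} (hp : Odd p)
    (s : ℕ) (d : R) :
    ∃ e : R, (1 + (p : R) ^ (s + 1) * d) ^ p = 1 + p ^ (s + 2) * d + p ^ (s + 3) * e := by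
  obtain ⟨f, hf⟩ := odd_sq_dvd_geom_sum₂_sub (R := R) 1 (p ^ s * d) hp
  refine ⟨d * f, ?_⟩
  have hgeom := geom_sum_mul (1 + (p : R) ^ (s + 1) * d) p
  simp only [one_pow, mul_one, ← mul_assoc, ← pow_succ'] at hf
  linear_combination -hgeom + ((p : R) ^ (s + 1) * d) * hf

theorem exists_one_add_prime_mul_pow_prime_pow_eq {R : Type*} [CommRing R] {p : ℕ} (hp : Odd p)
    (c : R) (t : ℕ) :
    ∃ e : R, (1 + (p : R) * c) ^ p ^ t = 1 + p ^ (t + 1) * c + p ^ (t + 2) * e := by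
  induction t with
  | zero => exact ⟨0, by simp⟩
  | succ t ih =>
    obtain ⟨e, he⟩ := ih
    obtain ⟨e', he'⟩ := exists_one_add_pow_prime_pow_mul_pow_eq hp t (c + p * e)
    refine ⟨e + e', ?_⟩
    rw [pow_succ, pow_mul, he, show (1 + (p : R) ^ (t + 1) * c + p ^ (t + 2) * e) =
      1 + p ^ (t + 1) * (c + p * e) by ring, he']
    ring

theorem Nat.not_two_add_mul_modEq_one {N : ℕ} (hN : N ≠ 1) (s : ℕ) : ¬ 2 + N * s ≡ 1 [MOD N] := by
  intro h
  have h2 : 1 ≡ 2 [MOD N] := h.symm.trans (Nat.add_mul_mod_self_left 2 N s)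
  exact hN (Nat.dvd_one.mp ((Nat.modEq_iff_dvd' one_le_two).mp h2))

theorem chooseSumOneMod_eq_add_sum_Ioc {N m : ℕ} (hm0 : m ≠ 0) (hm : ¬ m ≡ 1 [MOD N]) :
    chooseSumOneMod N m = m + ∑ j ∈ (Ioc 1 (m - 1)).filter (· % N = 1 % N), m.choose j := by
  have h0 : ¬ 0 ≡ 1 [MOD N] := fun h =>
    hm (by rw [Nat.dvd_one.mp ((Nat.modEq_iff_dvd' zero_le_one).mp h)]; exact Nat.modEq_one)
  have hfilter : (range (m + 1)).filter (· % N = 1 % N) =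
      insert 1 ((Ioc 1 (m - 1)).filter (· % N = 1 % N)) := by
    ext j
    simp only [mem_filter, mem_range, mem_insert, mem_Ioc]
    constructor
    · rintro ⟨hj, hjN⟩
      rcases (by omega : j = 0 ∨ j = 1 ∨ (1 < j ∧ j ≤ m - 1) ∨ j = m) with rfl | rfl | hj | rfl
      · exact absurd hjN h0
      · exact Or.inl rfl
      · exact Or.inr ⟨hj, hjN⟩
      · exact absurd hjN hm
    · rintro (rfl | ⟨hj, hjN⟩)
      · exact ⟨by omega, rfl⟩
      · exact ⟨by omega, hjN⟩
  rw [chooseSumOneMod, hfilter, sum_insert (by simp), Nat.choose_one_right]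

theorem chooseSumOneMod_two {N : ℕ} (hN : N ≠ 1) : chooseSumOneMod N 2 = 2 := by
  have h2 : ¬ 2 ≡ 1 [MOD N] := by simpa using Nat.not_two_add_mul_modEq_one hN 0
  simp [chooseSumOneMod_eq_add_sum_Ioc two_ne_zero h2]

theorem chooseSumOneMod_add_two {N : ℕ} (hN : 2 ≤ N) :
    chooseSumOneMod N (N + 2) = 2 * (N + 2) := by
  have hfilter : (Ioc 1 (N + 2 - 1)).filter (· % N = 1 % N) = {N + 1} := by
    ext j
    simp only [mem_filter, mem_Ioc, mem_singleton]
    constructor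
    · rintro ⟨hj, hjN⟩
      have hdvd : N ∣ j - 1 := (Nat.modEq_iff_dvd' (by omega)).mp (Nat.ModEq.symm hjN)
      have := Nat.eq_of_dvd_of_lt_two_mul (by omega) hdvd (by omega)
      omega
    · rintro rfl
      exact ⟨by omega, Nat.add_mod_left N 1⟩
  have hN2 : ¬ N + 2 ≡ 1 [MOD N] := by
    simpa using Nat.not_two_add_mul_modEq_one (N := N) (by omega) 1
  rw [chooseSumOneMod_eq_add_sum_Ioc (by omega) hN2, hfilter, sum_singleton,
    Nat.choose_succ_self_right]
  ring

namespace ZMod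

variable {p : ℕ} [Fact p.Prime] {q : ℕ}

theorem prime_dvd_iff_castHom_eq_zero (x : ZMod (p ^ (q + 1))) :
    (p : ZMod (p ^ (q + 1))) ∣ x ↔ castHom (dvd_pow_self p q.succ_ne_zero) (ZMod p) x = 0 := by
  constructor
  · rintro ⟨c, rfl⟩
    simp
  · intro h
    rw [← natCast_zmod_val x, map_natCast, natCast_eq_zero_iff] at h
    obtain ⟨c, hc⟩ := h
    exact ⟨c, by rw [← natCast_zmod_val x, hc, Nat.cast_mul]⟩

theorem isUnit_iff_castHom_ne_zero (x : ZMod (p ^ (q + 1))) :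
    IsUnit x ↔ castHom (dvd_pow_self p q.succ_ne_zero) (ZMod p) x ≠ 0 := by
  rw [← natCast_zmod_val x, map_natCast, Ne, natCast_eq_zero_iff,
    isUnit_natCast_iff_not_dvd_pow Fact.out q.succ_pos]

theorem pow_prime_pow_eq_one_of_castHom_eq_one {z : ZMod (p ^ (q + 1))}
    (hz : castHom (dvd_pow_self p q.succ_ne_zero) (ZMod p) z = 1) : z ^ p ^ q = 1 := by
  have hdvd := dvd_sub_pow_of_dvd_sub
    ((prime_dvd_iff_castHom_eq_zero (z - 1)).mpr (by rw [map_sub, hz, map_one, sub_self])) q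
  rwa [one_pow, ← Nat.cast_pow, natCast_self, zero_dvd_iff, sub_eq_zero] at hdvd

theorem eq_one_of_pow_eq_one_of_castHom_eq_one {z : ZMod (p ^ (q + 1))} (hz : z ^ (p - 1) = 1)
    (hz' : castHom (dvd_pow_self p q.succ_ne_zero) (ZMod p) z = 1) : z = 1 := by
  have hcop : (p - 1).Coprime (p ^ q) :=
    ((Nat.coprime_self_sub_left (Fact.out : p.Prime).one_le).mpr
      (Nat.coprime_one_left p)).pow_right q
  simpa [hcop.gcd_eq_one] using pow_gcd_eq_one.mpr ⟨hz, pow_prime_pow_eq_one_of_castHom_eq_one hz'⟩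

theorem exists_pow_eq_one_castHom_eq {a : ZMod p} (ha : a ≠ 0) :
    ∃ ω : ZMod (p ^ (q + 1)), ω ^ (p - 1) = 1 ∧
      castHom (dvd_pow_self p q.succ_ne_zero) (ZMod p) ω = a := by
  obtain ⟨x, rfl⟩ := ringHom_surjective (castHom (dvd_pow_self p q.succ_ne_zero) (ZMod p)) a
  refine ⟨x ^ p ^ q, ?_, by rw [map_pow, pow_card_pow]⟩
  rw [← pow_mul, mul_comm, pow_mul]
  exact pow_prime_pow_eq_one_of_castHom_eq_one (by rw [map_pow, pow_card_sub_one_eq_one ha])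

theorem exists_pow_eq_one_isUnit_pow_sub_one :
    ∃ ω : ZMod (p ^ (q + 1)), ω ^ (p - 1) = 1 ∧ ∀ m, ¬ p - 1 ∣ m → IsUnit (ω ^ m - 1) := by
  obtain ⟨g, hg⟩ := IsCyclic.exists_ofOrder_eq_natCard (α := (ZMod p)ˣ)
  obtain ⟨ω, hω, hωg⟩ := exists_pow_eq_one_castHom_eq (q := q) g.ne_zero
  refine ⟨ω, hω, fun m hm => (isUnit_iff_castHom_ne_zero _).mpr ?_⟩
  rwa [map_sub, map_pow, map_one, hωg, sub_ne_zero, Ne, ← Units.val_pow_eq_pow_val,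
    Units.val_eq_one, ← orderOf_dvd_iff_pow_eq_one, hg, Nat.card_eq_fintype_card, card_units]

theorem isUnit_one_add_or_eq_zero (hp2 : p ≠ 2) {ζ : ZMod (p ^ (q + 1))} (hζ : ζ ^ (p - 1) = 1) :
    IsUnit (1 + ζ) ∨ 1 + ζ = 0 := by
  rw [or_iff_not_imp_left, isUnit_iff_castHom_ne_zero, not_not, map_add, map_one]
  intro h
  have hneg : -ζ = 1 := by
    refine eq_one_of_pow_eq_one_of_castHom_eq_one ?_ ?_
    · rw [((Fact.out : p.Prime).even_sub_one hp2).neg_pow, hζ]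
    · rw [map_neg]
      linear_combination -h
  linear_combination -hneg

theorem pow_two_add_mul_eq (hp2 : p ≠ 2) {t : ℕ} {y : ZMod (p ^ (t + 2))} (hy : IsUnit y ∨ y = 0)
    (n : ℕ) :
    y ^ (2 + n * (p - 1) * p ^ t) =
      y ^ 2 + (n * p ^ t : ZMod (p ^ (t + 2))) * (y ^ (p + 1) - y ^ 2) := by
  rcases hy with hy | rfl
  swap
  · simp
  obtain ⟨c, hc⟩ : (p : ZMod (p ^ (t + 2))) ∣ y ^ (p - 1) - 1 := by
    rw [prime_dvd_iff_castHom_eq_zero, map_sub, map_pow, map_one,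
      pow_card_sub_one_eq_one ((isUnit_iff_castHom_ne_zero y).mp hy), sub_self]
  obtain ⟨e, he⟩ :=
    exists_one_add_prime_mul_pow_prime_pow_eq ((Fact.out : p.Prime).odd_of_ne_two hp2) c t
  have hp0 : (p : ZMod (p ^ (t + 2))) ^ (t + 2) = 0 := by rw [← Nat.cast_pow, natCast_self]
  have hsq : ((p : ZMod (p ^ (t + 2))) ^ (t + 1) * c) ^ 2 = 0 := by
    rw [mul_pow, ← pow_mul, show (t + 1) * 2 = t + 2 + t by ring,
      pow_add (p : ZMod (p ^ (t + 2))), hp0, zero_mul, zero_mul]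
  have hyp : y ^ (p - 1) = 1 + p * c := by linear_combination hc
  calc y ^ (2 + n * (p - 1) * p ^ t) = y ^ 2 * ((y ^ (p - 1)) ^ p ^ t) ^ n := by
        rw [← pow_mul, ← pow_mul, ← pow_add]
        ring_nf
    _ = y ^ 2 * (1 + p ^ (t + 1) * c) ^ n := by rw [hyp, he, hp0, zero_mul, add_zero]
    _ = y ^ 2 + n * p ^ t * (y ^ 2 * y ^ (p - 1) - y ^ 2) := by
        rw [one_add_pow_of_sq_eq_zero hsq, hyp]
        ring
    _ = y ^ 2 + n * p ^ t * (y ^ (p + 1) - y ^ 2) := by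
        rw [← pow_add, show 2 + (p - 1) = p + 1 by have := (Fact.out : p.Prime).one_le; omega]

end ZMod

theorem cast_chooseSumOneMod_two_add_mul_prime_pow {p : ℕ} [Fact p.Prime] (hp2 : p ≠ 2)
    (n t : ℕ) :
    (chooseSumOneMod (p - 1) (2 + n * (p - 1) * p ^ t) : ZMod (p ^ (t + 2))) =
      2 + 2 * n * p ^ (t + 1) := by
  have hp : p.Prime := Fact.out
  have hp3 : 3 ≤ p := by have := hp.two_le; omega
  obtain ⟨ω, hω, hunit⟩ := ZMod.exists_pow_eq_one_isUnit_pow_sub_one (p := p) (q := t + 1)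
  let S (m : ℕ) : ZMod (p ^ (t + 2)) :=
    ∑ k ∈ range (p - 1), ω ^ (k * (p - 1 - 1)) * (1 + ω ^ k) ^ m
  have hS (m : ℕ) : S m = (p - 1 : ℕ) * chooseSumOneMod (p - 1) m :=
    sum_pow_mul_one_add_pow hω hunit m
  have hSr : S (2 + n * (p - 1) * p ^ t) =
      S 2 + (n * p ^ t : ZMod (p ^ (t + 2))) * (S (p - 1 + 2) - S 2) := by
    simp only [S, mul_sub, mul_sum, ← sum_sub_distrib, ← sum_add_distrib,
      show p - 1 + 2 = p + 1 by omega]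
    refine sum_congr rfl fun k _ => ?_
    have hζ : (ω ^ k) ^ (p - 1) = 1 := by rw [← pow_mul, mul_comm, pow_mul, hω, one_pow]
    rw [ZMod.pow_two_add_mul_eq hp2 (ZMod.isUnit_one_add_or_eq_zero hp2 hζ)]
    ring
  have hN : IsUnit ((p - 1 : ℕ) : ZMod (p ^ (t + 2))) :=
    (ZMod.isUnit_natCast_iff_not_dvd_pow hp (Nat.succ_pos _)).mpr
      (Nat.not_dvd_of_pos_of_lt (by omega) (by omega))
  refine hN.mul_left_cancel ?_
  rw [← hS, hSr, hS, hS, chooseSumOneMod_two (by omega), chooseSumOneMod_add_two (by omega)]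
  push_cast [Nat.cast_sub hp.one_le]
  ring

theorem stmt_14 (p n t r : ℕ) (hp : p.Prime) (hp3 : 3 < p)
    (hr : r = 2 + n * (p - 1) * p^t) :
    (p : ℤ)^(t + 2) ∣ (∑ j ∈ (Finset.Ioc 1 (r - 1)).filter
        (fun j => j % (p - 1) = 1 % (p - 1)), (r.choose j : ℤ))
      - (2 - (r : ℤ) + 2 * (n : ℤ) * (p : ℤ)^(t + 1)) := by
  have : Fact p.Prime := ⟨hp⟩
  have hr1 : ¬ r ≡ 1 [MOD p - 1] := by
    rw [hr, mul_comm n, mul_assoc]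
    exact Nat.not_two_add_mul_modEq_one (by omega) _
  have key := cast_chooseSumOneMod_two_add_mul_prime_pow (p := p) (by omega) n t
  rw [← hr, chooseSumOneMod_eq_add_sum_Ioc (by omega) hr1] at key
  rw [show (p : ℤ) ^ (t + 2) = (p ^ (t + 2) : ℕ) by push_cast; rfl,
    ← ZMod.intCast_zmod_eq_zero_iff_dvd]
  push_cast at key ⊢
  linear_combination key
end
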